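/- arXiv:math/0601714 — 3 statements merged into one kernel-verified Lean document; each statement's English description precedes it below -/
import Mathlib

section
/- Let Δ be a simple polytope with 0 in its interior, ξ generic (α_{i,p}·ξ ≠ 0 for all p,i), and q the unique vertex where x ↦ ξ·x is minimized on Δ. For the flipped edge vectors α^♯_{i,p} := sign(α_{i,p}·ξ)·α_{i,p}, write p = Σᵢ a_{i,p} α^♯_{i,p}. Then for every vertex p ≠ q, at least one coefficient a_{i,p} is strictly positive, while at q all a_{i,q} < 0. -/
/-!
Since `0` is interior to `Δ` and `Δ` lies in the cone `p + ∑ ℝ≥0 α_{i,p}`, every coordinate of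
`p` in the basis `α_{·,p}` is negative. Flipping `α_{i,p}` multiplies its coordinate by the sign of
`α_{i,p} · ξ`, so `a_{i,p} > 0` exactly when the edge `α_{i,p}` goes down. At `q` every edge goes
up, so all `a_{i,q} < 0`. At a vertex `p` all of whose edges go up, `q - p` lies in the cone of
the edges while `ξ · (q - p) ≤ 0`, which forces `q = p`.
-/

open Filter Topology

namespace Module.Basis

variable {ι E : Type*}

theorem repr_apply_neg_of_sub_nonneg [TopologicalSpace E] [AddCommGroup E] [Module ℝ E]
    [ContinuousSMul ℝ E] (b : Basis ι ℝ E) {s : Set E} (h0 : (0 : E) ∈ interior s) {p : E}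
    (hcone : ∀ x ∈ s, ∀ i, 0 ≤ b.repr (x - p) i) (i : ι) : b.repr p i < 0 := by
  have hsmul : Tendsto (fun t : ℝ => -t • b i) (𝓝[>] 0) (𝓝 0) := by
    have : Continuous fun t : ℝ => -t • b i := by fun_prop
    simpa using (this.tendsto 0).mono_left nhdsWithin_le_nhds
  obtain ⟨t, hts, ht⟩ :=
    ((hsmul.eventually (mem_interior_iff_mem_nhds.mp h0)).and self_mem_nhdsWithin).exists
  have := hcone _ hts i
  simp only [map_sub, map_smul, repr_self, Finsupp.sub_apply, Finsupp.smul_apply,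
    Finsupp.single_eq_same, smul_eq_mul, mul_one] at this
  linarith [show (0 : ℝ) < t from ht]

theorem repr_sum_smul_ite_neg {R : Type*} [Ring R] [Fintype ι] [AddCommGroup E] [Module R E]
    (b : Basis ι R E) (P : ι → Prop) [DecidablePred P] (c : ι → R) {v : E}
    (hv : v = ∑ i, c i • if P i then b i else -b i) (j : ι) :
    b.repr v j = if P j then c j else -c j := by
  have : v = ∑ i, (c i * if P i then 1 else -1) • b i := by
    rw [hv]
    refine Finset.sum_congr rfl fun i _ => ?_
    split_ifs <;> simp
  rw [this, repr_sum_self]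
  split_ifs <;> simp

theorem eq_zero_of_repr_nonneg_of_map_nonpos {𝕜 : Type*} [Field 𝕜] [LinearOrder 𝕜]
    [IsStrictOrderedRing 𝕜] [Fintype ι] [AddCommGroup E] [Module 𝕜 E]
    (b : Basis ι 𝕜 E) (f : E →ₗ[𝕜] 𝕜) (hf : ∀ i, 0 < f (b i)) {v : E}
    (hv : ∀ i, 0 ≤ b.repr v i) (hfv : f v ≤ 0) : v = 0 := by
  have hterm : ∀ i ∈ Finset.univ, 0 ≤ b.repr v i * f (b i) :=
    fun i _ => mul_nonneg (hv i) (hf i).le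
  have hsum : ∑ i, b.repr v i * f (b i) = 0 := by
    refine le_antisymm ?_ (Finset.sum_nonneg hterm)
    calc ∑ i, b.repr v i * f (b i) = f (∑ i, b.repr v i • b i) := by
          simp only [map_sum, map_smul, smul_eq_mul]
      _ = f v := by rw [b.sum_repr]
      _ ≤ 0 := hfv
  rw [b.ext_elem_iff]
  intro i
  simpa [(hf i).ne'] using (Finset.sum_eq_zero_iff_of_nonneg hterm).mp hsum i (Finset.mem_univ i)

end Module.Basis

theorem LinearMap.map_nonneg_of_isMinOn_of_add_smul_mem {𝕜 E : Type*} [Field 𝕜] [LinearOrder 𝕜]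
    [IsStrictOrderedRing 𝕜] [AddCommGroup E] [Module 𝕜 E] (f : E →ₗ[𝕜] 𝕜) {s : Set E} {q v : E}
    (hmin : IsMinOn f s q) {t : 𝕜} (ht : 0 < t) (hmem : q + t • v ∈ s) : 0 ≤ f v := by
  have := isMinOn_iff.mp hmin _ hmem
  rw [map_add, map_smul, smul_eq_mul] at this
  exact nonneg_of_mul_nonneg_right (by linarith) ht

/-- For a simple polytope `Δ = conv(V)` with `0` in its interior, a
generic `ξ`, polarized edge vectors `α♯_{i,p} = sign(α_{i,p}·ξ)·α_{i,p}`, and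
`p = Σᵢ a_{i,p} α♯_{i,p}`: at the minimizing vertex `q` all `a_{i,q} < 0`, while at
every other vertex `p ≠ q` at least one `a_{i,p} > 0`. -/
theorem stmt_9 (n : ℕ) (V : Finset (Fin n → ℝ)) (Δ : Set (Fin n → ℝ))
    (hΔ : Δ = convexHull ℝ ↑V)
    (α : (Fin n → ℝ) → Module.Basis (Fin n) ℝ (Fin n → ℝ))
    (hcone : ∀ p ∈ V, ∀ x ∈ Δ, ∀ i, 0 ≤ (α p).repr (x - p) i)
    (hedge : ∀ p ∈ V, ∀ i, ∃ t : ℝ, 0 < t ∧ p + t • (α p) i ∈ Δ)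
    (ξ : Fin n → ℝ)
    (hgen : ∀ p ∈ V, ∀ i, (∑ j, (α p) i j * ξ j) ≠ 0)
    (h0 : (0 : Fin n → ℝ) ∈ interior Δ)
    (αs : (Fin n → ℝ) → Fin n → (Fin n → ℝ))
    (hαs : ∀ p i, αs p i = if 0 < ∑ j, (α p) i j * ξ j then (α p) i else -((α p) i))
    (a : (Fin n → ℝ) → Fin n → ℝ)
    (ha : ∀ p ∈ V, p = ∑ i, a p i • αs p i)
    (q : Fin n → ℝ) (hq : q ∈ V)
    (hmin : ∀ x ∈ Δ, ∑ j, q j * ξ j ≤ ∑ j, x j * ξ j) :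
    (∀ p ∈ V, p ≠ q → ∃ i, 0 < a p i) ∧ (∀ i, a q i < 0) := by
  -- `ℓ x` unfolds to `∑ j, x j * ξ j`, the form in which the hypotheses are stated.
  set ℓ := (dotProductBilin ℝ ℝ).flip ξ
  have hVΔ : ∀ p ∈ V, p ∈ Δ := fun p hp => hΔ ▸ subset_convexHull ℝ _ hp
  have hrepr (p) (hp : p ∈ V) (i) : (α p).repr p i = if 0 < ℓ (α p i) then a p i else -a p i :=
    (α p).repr_sum_smul_ite_neg _ (a p) ((ha p hp).trans (by simp only [hαs]; rfl)) i
  have hneg (p) (hp : p ∈ V) (i) : (α p).repr p i < 0 :=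
    (α p).repr_apply_neg_of_sub_nonneg h0 (hcone p hp) i
  constructor
  · intro p hp hpq
    by_contra! ha_nonpos
    have hup (i) : 0 < ℓ (α p i) := by
      by_contra! hdown
      have := hneg p hp i
      rw [hrepr p hp i, if_neg hdown.not_gt] at this
      linarith [ha_nonpos i]
    refine hpq (sub_eq_zero.mp ?_).symm
    refine (α p).eq_zero_of_repr_nonneg_of_map_nonpos ℓ hup (hcone p hp q (hVΔ q hq)) ?_
    rw [map_sub, sub_nonpos]
    exact hmin p (hVΔ p hp)
  · intro i
    obtain ⟨t, ht, hmem⟩ := hedge q hq i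
    have hup : 0 < ℓ (α q i) :=
      (ℓ.map_nonneg_of_isMinOn_of_add_smul_mem (isMinOn_iff.mpr hmin) ht hmem).lt_of_ne' (hgen q hq i)
    simpa [hrepr q hq i, hup] using hneg q hq i
end

section
/- Let f be a symbol of order r on ℝⁿ and define f(x,s) := f(x)·(1+‖x‖²)^{s/2}. Then the function C(s) := Σ_{ℓ∈ℤⁿ} f(ℓ,s) - ∫_{ℝⁿ} f(x,s) dx is well-defined and holomorphic on the half-plane Re s < -r - n. -/
open MeasureTheory

set_option maxHeartbeats 1000000 in
private lemma aux_pi_summable (n : ℕ) (g : ℤ → ℝ) (h0 : ∀ m, 0 ≤ g m) (hg : Summable g) :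
    Summable fun ℓ : Fin n → ℤ => ∏ i, g (ℓ i) := by
  induction n with
  | zero => exact Summable.of_finite
  | succ n ih =>
      have hsum : Summable fun p : ℤ × (Fin n → ℤ) => g p.1 * ∏ i, g (p.2 i) :=
        Summable.mul_of_nonneg (ι := ℤ) (ι' := (Fin n → ℤ)) (f := g)
          (g := fun ℓ : Fin n → ℤ => ∏ i, g (ℓ i)) hg ih h0
          (fun ℓ => Finset.prod_nonneg fun i _ => h0 _)
      rw [← (Fin.consEquiv fun _ : Fin (n + 1) => ℤ).summable_iff]
      refine hsum.congr fun p => ?_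
      simp [Fin.consEquiv, Fin.prod_univ_succ]

private lemma aux_int_summable {q : ℝ} (hq : q < -1) :
    Summable fun m : ℤ => (1 + |(m : ℝ)|) ^ q := by
  have hnat : Summable fun m : ℕ => (1 + (m : ℝ)) ^ q := by
    have h := (Real.summable_nat_rpow.mpr hq).comp_injective Nat.succ_injective
    refine h.congr fun m => ?_
    simp [Function.comp, Nat.succ_eq_add_one]
    push_cast
    ring_nf
  apply Summable.of_nat_of_neg
  · exact hnat.congr fun m => by simp
  · exact hnat.congr fun m => by simp

private lemma aux_lattice_summable (n : ℕ) {t : ℝ} (ht : t < -(n : ℝ)) :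
    Summable fun ℓ : Fin n → ℤ => (1 + ‖(fun i => (ℓ i : ℝ))‖) ^ t := by
  rcases Nat.eq_zero_or_pos n with hn | hn
  · subst hn; exact Summable.of_finite
  have hn1 : (1 : ℝ) ≤ n := by exact_mod_cast hn
  have hnpos : (0 : ℝ) < n := by linarith
  have hq : t / n < -1 := by
    rw [div_lt_iff₀ hnpos]
    nlinarith
  have htneg : t / n ≤ 0 := by nlinarith
  have hsum := aux_pi_summable n (fun m => (1 + |(m : ℝ)|) ^ (t / n))
    (fun m => Real.rpow_nonneg (by positivity) _) (aux_int_summable hq)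
  refine Summable.of_nonneg_of_le (fun ℓ => Real.rpow_nonneg (by positivity) _)
    (fun ℓ => ?_) hsum
  set x : Fin n → ℝ := fun i => (ℓ i : ℝ) with hx
  have hxn : (0:ℝ) < 1 + ‖x‖ := by positivity
  have hP : ∏ i, (1 + |x i|) ≤ (1 + ‖x‖) ^ n := by
    have h := Finset.prod_le_prod (s := Finset.univ) (f := fun i => 1 + |x i|)
      (g := fun _ => 1 + ‖x‖) (fun i _ => by positivity)
      (fun i _ => by
        have hb : |x i| ≤ ‖x‖ := by
          simpa [Real.norm_eq_abs] using norm_le_pi_norm x i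
        show (1:ℝ) + |x i| ≤ 1 + ‖x‖
        linarith)
    simpa using h
  have hPpos : 0 < ∏ i, (1 + |x i|) := Finset.prod_pos fun i _ => by positivity
  calc (1 + ‖x‖) ^ t = ((1 + ‖x‖) ^ n) ^ (t / n) := by
        rw [← Real.rpow_natCast (1 + ‖x‖) n, ← Real.rpow_mul hxn.le]
        congr 1
        field_simp
    _ ≤ (∏ i, (1 + |x i|)) ^ (t / n) :=
        Real.rpow_le_rpow_of_nonpos hPpos hP htneg
    _ = ∏ i, (1 + |x i|) ^ (t / n) :=
        (Real.finset_prod_rpow _ _ (fun i _ => by positivity) _).symm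

private lemma aux_gauge (σ : ℝ) {u : ℝ} (h : u ≤ σ) {y : ℝ} (hy : 0 ≤ y) :
    (1 + y ^ 2) ^ (u / 2) ≤ 2 ^ (|σ| / 2) * (1 + y) ^ σ := by
  have h1 : (1:ℝ) ≤ 1 + y ^ 2 := le_add_of_nonneg_right (sq_nonneg y)
  have hy1 : (0:ℝ) < 1 + y := by linarith
  have step1 : (1 + y ^ 2) ^ (u / 2) ≤ (1 + y ^ 2) ^ (σ / 2) :=
    Real.rpow_le_rpow_of_exponent_le h1 (by linarith)
  have e2 : ((1 + y) ^ 2 : ℝ) ^ (σ / 2) = (1 + y) ^ σ := by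
    rw [← Real.rpow_natCast (1 + y) 2, ← Real.rpow_mul hy1.le]
    congr 1
    push_cast
    ring
  rcases le_or_gt 0 σ with hσ | hσ
  · have step2 : (1 + y ^ 2) ^ (σ / 2) ≤ ((1 + y) ^ 2) ^ (σ / 2) :=
      Real.rpow_le_rpow (by positivity) (by nlinarith) (by linarith)
    have h2 : (1:ℝ) ≤ 2 ^ (|σ| / 2) :=
      Real.one_le_rpow (by norm_num) (by positivity)
    have h3 : (0:ℝ) ≤ (1 + y) ^ σ := Real.rpow_nonneg hy1.le _
    nlinarith [step1.trans (step2.trans_eq e2)]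
  · have hle : ((1 + y) ^ 2) / 2 ≤ 1 + y ^ 2 := by nlinarith [sq_nonneg (1 - y)]
    have step2 : (1 + y ^ 2) ^ (σ / 2) ≤ (((1 + y) ^ 2) / 2) ^ (σ / 2) :=
      Real.rpow_le_rpow_of_nonpos (by positivity) hle (by linarith)
    have e3 : (((1 + y) ^ 2) / 2 : ℝ) ^ (σ / 2) = 2 ^ (|σ| / 2) * (1 + y) ^ σ := by
      rw [Real.div_rpow (by positivity) (by norm_num), e2, abs_of_neg hσ,
        div_eq_mul_inv, ← Real.rpow_neg (by norm_num)]
      ring_nf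
    calc (1 + y ^ 2) ^ (u / 2) ≤ (((1 + y) ^ 2) / 2) ^ (σ / 2) := step1.trans step2
      _ = 2 ^ (|σ| / 2) * (1 + y) ^ σ := e3

/-- For a symbol `f` of order `r` and the gauged symbol
`F(x,s) = f(x)·(1+‖x‖²)^{s/2}`, the function
`C(s) = Σ_{ℓ∈ℤⁿ} F(ℓ,s) - ∫_{ℝⁿ} F(x,s) dx` is well defined (sum and integral
converge absolutely) and holomorphic on the half-plane `Re s < -r - n`. -/
theorem stmt_14 (n : ℕ) (r : ℝ) (f : (Fin n → ℝ) → ℝ) (hf : ContDiff ℝ (⊤ : ℕ∞) f)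
    (hsym : ∀ a : ℕ, ∃ C : ℝ, ∀ x, ‖iteratedFDeriv ℝ a f x‖ ≤ C * (1 + ‖x‖) ^ (r - a))
    (F : (Fin n → ℝ) → ℂ → ℂ)
    (hF : ∀ x s, F x s = (f x : ℂ) * ((1 + (‖x‖ : ℂ) ^ 2) ^ (s / 2)))
    (C : ℂ → ℂ)
    (hC : ∀ s, C s = (∑' ℓ : Fin n → ℤ, F (fun i => (ℓ i : ℝ)) s) - ∫ x, F x s) :
    (∀ s : ℂ, s.re < -r - n →
      (Summable fun ℓ : Fin n → ℤ => F (fun i => (ℓ i : ℝ)) s) ∧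
        Integrable fun x => F x s) ∧
      DifferentiableOn ℂ C {s : ℂ | s.re < -r - n} := by
  -- rewrite F with a real base
  have hF' : ∀ x s, F x s = (f x : ℂ) * ((((1 : ℝ) + ‖x‖ ^ 2 : ℝ) : ℂ) ^ (s / 2)) := by
    intro x s
    rw [hF]
    congr 2
    push_cast
    ring
  obtain ⟨C0, hC0⟩ := hsym 0
  have hC0' : ∀ x, |f x| ≤ C0 * (1 + ‖x‖) ^ r := by
    intro x
    have := hC0 x
    rwa [norm_iteratedFDeriv_zero, Nat.cast_zero, sub_zero, Real.norm_eq_abs] at this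
  -- norm computation
  have hre : ∀ s : ℂ, (s / 2).re = s.re / 2 := by
    intro s
    have : s / 2 = ((2⁻¹ : ℝ) : ℂ) * s := by push_cast; ring
    rw [this, Complex.re_ofReal_mul]
    ring
  have hnorm : ∀ x s, ‖F x s‖ = |f x| * (1 + ‖x‖ ^ 2) ^ (s.re / 2) := by
    intro x s
    rw [hF' x s, norm_mul, Complex.norm_real, Real.norm_eq_abs,
      Complex.norm_cpow_eq_rpow_re_of_pos (by positivity), hre]
  -- key uniform bound
  have key : ∀ σ : ℝ, ∀ s : ℂ, s.re ≤ σ → ∀ x : Fin n → ℝ,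
      ‖F x s‖ ≤ (C0 * 2 ^ (|σ| / 2)) * (1 + ‖x‖) ^ (r + σ) := by
    intro σ s hs x
    rw [hnorm]
    have h1 := hC0' x
    have h2 := aux_gauge σ hs (norm_nonneg x)
    have h3 : (0:ℝ) ≤ (1 + ‖x‖ ^ 2) ^ (s.re / 2) := Real.rpow_nonneg (by positivity) _
    have h4 : (0:ℝ) ≤ C0 * (1 + ‖x‖) ^ r := le_trans (abs_nonneg _) h1
    calc |f x| * (1 + ‖x‖ ^ 2) ^ (s.re / 2)
        ≤ (C0 * (1 + ‖x‖) ^ r) * (2 ^ (|σ| / 2) * (1 + ‖x‖) ^ σ) := mul_le_mul h1 h2 h3 h4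
      _ = (C0 * 2 ^ (|σ| / 2)) * (1 + ‖x‖) ^ (r + σ) := by
          rw [Real.rpow_add (by positivity)]
          ring
  -- integrable comparison function
  have hIntBound : ∀ t : ℝ, t < -(n : ℝ) →
      Integrable (fun x : Fin n → ℝ => (1 + ‖x‖) ^ t) := by
    intro t ht
    have hfr : (Module.finrank ℝ (Fin n → ℝ) : ℝ) < -t := by
      simp only [Module.finrank_fintype_fun_eq_card, Fintype.card_fin]
      linarith
    have := integrable_one_add_norm (E := Fin n → ℝ) (μ := volume) hfr
    simpa using this
  -- continuity in x
  have hFcont : ∀ s, Continuous fun x : Fin n → ℝ => F x s := by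
    intro s
    have : (fun x : Fin n → ℝ => F x s)
        = fun x => (f x : ℂ) * ((((1 : ℝ) + ‖x‖ ^ 2 : ℝ) : ℂ) ^ (s / 2)) :=
      funext fun x => hF' x s
    rw [this]
    refine (Complex.continuous_ofReal.comp hf.continuous).mul ?_
    refine Continuous.cpow ?_ continuous_const ?_
    · exact Complex.continuous_ofReal.comp
        (continuous_const.add ((continuous_norm).pow 2))
    · intro x
      exact Complex.ofReal_mem_slitPlane.2 (by positivity)
  -- derivative in s
  have hderiv : ∀ (x : Fin n → ℝ) (s : ℂ), HasDerivAt (fun s => F x s)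
      ((f x : ℂ) * ((((1 : ℝ) + ‖x‖ ^ 2 : ℝ) : ℂ) ^ (s / 2))
        * (((Real.log (1 + ‖x‖ ^ 2) : ℝ) : ℂ) * (2⁻¹ : ℂ))) s := by
    intro x s
    have hc0 : (((1 : ℝ) + ‖x‖ ^ 2 : ℝ) : ℂ) ≠ 0 := by
      rw [Complex.ofReal_ne_zero]
      positivity
    have h2 : HasDerivAt (fun s : ℂ => s / 2) (2⁻¹ : ℂ) s := by
      simpa using (hasDerivAt_id s).div_const 2
    have h3 := (h2.const_cpow (c := (((1 : ℝ) + ‖x‖ ^ 2 : ℝ) : ℂ)) (Or.inl hc0)).const_mul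
      ((f x : ℂ))
    have heq : (fun s => F x s)
        = fun s => (f x : ℂ) * ((((1 : ℝ) + ‖x‖ ^ 2 : ℝ) : ℂ) ^ (s / 2)) :=
      funext fun s => hF' x s
    rw [heq]
    refine h3.congr_deriv ?_
    rw [Complex.ofReal_log (by positivity : (0:ℝ) ≤ 1 + ‖x‖ ^ 2)]
    ring
  -- part 1 : well-definedness
  have part1 : ∀ s : ℂ, s.re < -r - n →
      (Summable fun ℓ : Fin n → ℤ => F (fun i => (ℓ i : ℝ)) s) ∧
        Integrable fun x => F x s := by
    intro s hs
    have hrs : r + s.re < -(n : ℝ) := by linarith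
    constructor
    · apply Summable.of_norm
      refine Summable.of_nonneg_of_le (fun ℓ => norm_nonneg _)
        (fun ℓ => key s.re s le_rfl _)
        (((aux_lattice_summable n hrs).mul_left (C0 * 2 ^ (|s.re| / 2))))
    · refine Integrable.mono' ((hIntBound _ hrs).const_mul (C0 * 2 ^ (|s.re| / 2)))
        ((hFcont s).aestronglyMeasurable) ?_
      exact ae_of_all _ fun x => key s.re s le_rfl x
  refine ⟨part1, ?_⟩
  -- part 2 : holomorphy
  have hCeq : C = fun s => (∑' ℓ : Fin n → ℤ, F (fun i => (ℓ i : ℝ)) s) - ∫ x, F x s :=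
    funext hC
  rw [hCeq]
  intro s₀ hs₀
  simp only [Set.mem_setOf_eq] at hs₀
  set σ : ℝ := (s₀.re + (-r - n)) / 2 with hσdef
  have hσ1 : s₀.re < σ := by rw [hσdef]; linarith
  have hσ2 : σ < -r - n := by rw [hσdef]; linarith
  have hrs : r + σ < -(n : ℝ) := by linarith
  -- sum part
  have hsum_diff : DifferentiableAt ℂ
      (fun s => ∑' ℓ : Fin n → ℤ, F (fun i => (ℓ i : ℝ)) s) s₀ := by
    have hU : IsOpen {s : ℂ | s.re < σ} := isOpen_lt Complex.continuous_re continuous_const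
    have hdiff := Complex.differentiableOn_tsum_of_summable_norm
      ((aux_lattice_summable n hrs).mul_left (C0 * 2 ^ (|σ| / 2)))
      (fun ℓ => fun w _ => ((hderiv (fun i => (ℓ i : ℝ)) w).differentiableAt).differentiableWithinAt)
      hU
      (fun ℓ w hw => key σ w (le_of_lt hw) _)
    exact hdiff.differentiableAt (hU.mem_nhds hσ1)
  -- integral part
  have hε : (0:ℝ) < σ - s₀.re := by linarith
  set δ : ℝ := (-(n : ℝ) - (r + σ)) / 4 with hδdef
  have hδ : 0 < δ := by rw [hδdef]; linarith
  have hexp : r + σ + 2 * δ < -(n : ℝ) := by rw [hδdef]; linarith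
  have hGbound : ∀ x : Fin n → ℝ, ∀ s ∈ Metric.ball s₀ (σ - s₀.re),
      ‖(f x : ℂ) * ((((1 : ℝ) + ‖x‖ ^ 2 : ℝ) : ℂ) ^ (s / 2))
        * (((Real.log (1 + ‖x‖ ^ 2) : ℝ) : ℂ) * (2⁻¹ : ℂ))‖
        ≤ (C0 * 2 ^ (|σ| / 2) / (2 * δ)) * (1 + ‖x‖) ^ (r + σ + 2 * δ) := by
    intro x s hs
    have hsre : s.re ≤ σ := by
      have h1 : |(s - s₀).re| ≤ ‖s - s₀‖ := Complex.abs_re_le_norm _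
      have h2 : ‖s - s₀‖ < σ - s₀.re := by
        rw [← Complex.dist_eq]
        exact hs
      have := (abs_le.mp (h1.trans h2.le)).2
      simp only [Complex.sub_re] at this
      linarith
    have hlog0 : 0 ≤ Real.log (1 + ‖x‖ ^ 2) := Real.log_nonneg (by nlinarith [norm_nonneg x])
    have hlog : Real.log (1 + ‖x‖ ^ 2) ≤ (1 + ‖x‖) ^ (2 * δ) / δ := by
      have h1 : Real.log (1 + ‖x‖ ^ 2) ≤ (1 + ‖x‖ ^ 2) ^ δ / δ :=
        Real.log_le_rpow_div (by positivity) hδ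
      have h2 : (1 + ‖x‖ ^ 2 : ℝ) ^ δ ≤ ((1 + ‖x‖) ^ 2) ^ δ :=
        Real.rpow_le_rpow (by positivity) (by nlinarith [norm_nonneg x]) hδ.le
      have h3 : ((1 + ‖x‖ : ℝ) ^ 2) ^ δ = (1 + ‖x‖) ^ (2 * δ) := by
        rw [← Real.rpow_natCast (1 + ‖x‖) 2, ← Real.rpow_mul (by positivity)]
        norm_num
      calc Real.log (1 + ‖x‖ ^ 2) ≤ (1 + ‖x‖ ^ 2) ^ δ / δ := h1
        _ ≤ ((1 + ‖x‖) ^ 2) ^ δ / δ := by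
            gcongr
        _ = (1 + ‖x‖) ^ (2 * δ) / δ := by rw [h3]
    have hFb : ‖F x s‖ ≤ (C0 * 2 ^ (|σ| / 2)) * (1 + ‖x‖) ^ (r + σ) := key σ s hsre x
    have hFe : ‖(f x : ℂ) * ((((1 : ℝ) + ‖x‖ ^ 2 : ℝ) : ℂ) ^ (s / 2))‖ = ‖F x s‖ := by
      rw [hF' x s]
    have hK : (0:ℝ) ≤ C0 * 2 ^ (|σ| / 2) := by
      have := (norm_nonneg (F x s)).trans hFb
      by_contra hneg
      push_neg at hneg
      nlinarith [Real.rpow_pos_of_pos (show (0:ℝ) < 1 + ‖x‖ by positivity) (r + σ)]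
    rw [norm_mul, hFe, norm_mul, Complex.norm_real, Real.norm_eq_abs,
      abs_of_nonneg hlog0]
    have h2inv : ‖(2⁻¹ : ℂ)‖ = 2⁻¹ := by norm_num
    rw [h2inv]
    calc ‖F x s‖ * (Real.log (1 + ‖x‖ ^ 2) * 2⁻¹)
        ≤ ((C0 * 2 ^ (|σ| / 2)) * (1 + ‖x‖) ^ (r + σ)) * (((1 + ‖x‖) ^ (2 * δ) / δ) * 2⁻¹) := by
          apply mul_le_mul hFb
          · apply mul_le_mul_of_nonneg_right hlog (by norm_num)
          · positivity
          · positivity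
      _ = (C0 * 2 ^ (|σ| / 2) / (2 * δ)) * (1 + ‖x‖) ^ (r + σ + 2 * δ) := by
          have hmul : (1 + ‖x‖) ^ (r + σ + 2 * δ)
              = (1 + ‖x‖) ^ (r + σ) * (1 + ‖x‖) ^ (2 * δ) := by
            rw [← Real.rpow_add (show (0:ℝ) < 1 + ‖x‖ by positivity)]
          rw [hmul]
          field_simp
  have hGcont : Continuous fun x : Fin n → ℝ =>
      (f x : ℂ) * ((((1 : ℝ) + ‖x‖ ^ 2 : ℝ) : ℂ) ^ (s₀ / 2))
        * (((Real.log (1 + ‖x‖ ^ 2) : ℝ) : ℂ) * (2⁻¹ : ℂ)) := by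
    have h1 : (fun x : Fin n → ℝ => (f x : ℂ) * ((((1 : ℝ) + ‖x‖ ^ 2 : ℝ) : ℂ) ^ (s₀ / 2)))
        = fun x => F x s₀ := funext fun x => (hF' x s₀).symm
    refine Continuous.mul ?_ ?_
    · rw [h1]; exact hFcont s₀
    · refine Continuous.mul ?_ continuous_const
      exact Complex.continuous_ofReal.comp
        ((continuous_const.add ((continuous_norm).pow 2) : Continuous fun x : Fin n → ℝ => (1:ℝ) + ‖x‖ ^ 2).log (fun x => by show (1:ℝ) + ‖x‖ ^ 2 ≠ 0; positivity))
  have hint := hasDerivAt_integral_of_dominated_loc_of_deriv_le (μ := volume)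
    (F := fun s x => F x s) (x₀ := s₀)
    (bound := fun x => (C0 * 2 ^ (|σ| / 2) / (2 * δ)) * (1 + ‖x‖) ^ (r + σ + 2 * δ))
    (Metric.ball_mem_nhds s₀ hε)
    (Filter.Eventually.of_forall fun s => (hFcont s).aestronglyMeasurable)
    (part1 s₀ hs₀).2
    (F' := fun s x => (f x : ℂ) * ((((1 : ℝ) + ‖x‖ ^ 2 : ℝ) : ℂ) ^ (s / 2))
        * (((Real.log (1 + ‖x‖ ^ 2) : ℝ) : ℂ) * (2⁻¹ : ℂ)))
    hGcont.aestronglyMeasurable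
    (ae_of_all _ fun x s hs => hGbound x s hs)
    (((hIntBound _ hexp).const_mul _))
    (ae_of_all _ fun x s _ => hderiv x s)
  exact (hsum_diff.sub hint.2.differentiableAt).differentiableWithinAt
end

section
/- If f : ℝⁿ → ℝ is a homogeneous symbol of degree ℓ (so f(tx) = t^ℓ f(x) for ‖x‖ large and t ≥ 1), and F is a face of a lattice polytope Δ of dimension d not containing 0 in its affine hull through the origin, then there is a constant c such that ∫_{N·F} f dσ = c·N^{ℓ+d} + O(N^{ℓ+d-1}) as N → ∞, where dσ is the induced Lebesgue measure on the affine span of N·F. -/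
open MeasureTheory Pointwise Asymptotics

open scoped ENNReal NNReal

lemma aux_restr (n : ℕ) (d : ℝ) (hd : 0 ≤ d) {r : ℝ} (hr : 0 < r) (s : Set (Fin n → ℝ)) :
    (Measure.hausdorffMeasure d : Measure (Fin n → ℝ)).restrict (r • s)
      = (‖r‖₊ ^ d : ℝ≥0) • Measure.map (r • ·) ((Measure.hausdorffMeasure d).restrict s) := by
  ext A hA
  rw [Measure.restrict_apply hA, Measure.smul_apply,
    Measure.map_apply (measurable_const_smul r) hA,
    Measure.restrict_apply (measurable_const_smul r hA)]
  have h1 : (r • ·) ⁻¹' A = r⁻¹ • A := Set.preimage_smul₀ hr.ne' A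
  have h2 : A ∩ r • s = r • (r⁻¹ • A ∩ s) := by
    rw [Set.smul_set_inter₀ hr.ne', smul_inv_smul₀ hr.ne']
  rw [h2, Measure.hausdorffMeasure_smul₀ hd hr.ne', h1]

lemma aux_intg (n : ℕ) (d : ℝ) (hd : 0 ≤ d) {r : ℝ} (hr : 0 < r) (s : Set (Fin n → ℝ))
    (f : (Fin n → ℝ) → ℝ) (hfm : Continuous f) :
    ∫ x in r • s, f x ∂(Measure.hausdorffMeasure d)
      = r ^ d * ∫ x in s, f (r • x) ∂(Measure.hausdorffMeasure d) := by
  rw [aux_restr n d hd hr s, integral_smul_nnreal_measure,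
    integral_map (measurable_const_smul r).aemeasurable hfm.aestronglyMeasurable]
  simp [NNReal.smul_def, NNReal.coe_rpow, Real.norm_eq_abs, abs_of_pos hr]


/-- If `f` is a homogeneous symbol of degree `ℓ` on `ℝⁿ` and `F` is a
(compact) `d`-dimensional face of a lattice polytope whose affine hull does not pass
through the origin, then there is a constant `c` with
`∫_{N·F} f dσ = c·N^{ℓ+d} + O(N^{ℓ+d-1})` as `N → ∞`, where `dσ` is the induced
Lebesgue (d-dimensional Hausdorff) measure. -/
theorem stmt_18 (n d : ℕ) (ℓ : ℝ) (f : (Fin n → ℝ) → ℝ) (hf : ContDiff ℝ (⊤ : ℕ∞) f)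
    (hsym : ∀ a : ℕ, ∃ C : ℝ, ∀ x, ‖iteratedFDeriv ℝ a f x‖ ≤ C * (1 + ‖x‖) ^ (ℓ - a))
    (hhom : ∃ R : ℝ, ∀ x : Fin n → ℝ, R ≤ ‖x‖ → ∀ t : ℝ, 1 ≤ t → f (t • x) = t ^ ℓ * f x)
    (F : Set (Fin n → ℝ)) (hFc : IsCompact F) (hFne : F.Nonempty) (hFconv : Convex ℝ F)
    (hdim : Module.finrank ℝ (affineSpan ℝ F).direction = d)
    (h0 : (0 : Fin n → ℝ) ∉ affineSpan ℝ F) :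
    ∃ c : ℝ,
      (fun N : ℕ =>
          (∫ x in (N : ℝ) • F, f x ∂(Measure.hausdorffMeasure (d : ℝ)))
            - c * (N : ℝ) ^ (ℓ + d))
        =O[Filter.atTop] fun N : ℕ => (N : ℝ) ^ (ℓ + d - 1) := by
  obtain ⟨R, hR⟩ := hhom
  have h0F : (0 : Fin n → ℝ) ∉ F := fun h => h0 (subset_affineSpan ℝ F h)
  set m : ℝ := Metric.infDist 0 F with hm
  have hmpos : 0 < m := by
    rw [hm, ← hFc.isClosed.notMem_iff_infDist_pos hFne] at *
    exact h0F
  have hmle : ∀ x ∈ F, m ≤ ‖x‖ := fun x hx => by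
    have := Metric.infDist_le_dist_of_mem (x := (0 : Fin n → ℝ)) hx
    simpa [dist_eq_norm] using this
  obtain ⟨N₀, hN₀⟩ := exists_nat_ge (R / m)
  set N₁ : ℕ := max N₀ 1 with hN₁def
  have hN₁1 : (1 : ℝ) ≤ (N₁ : ℝ) := by exact_mod_cast Nat.le_max_right N₀ 1
  have hN₁pos : (0 : ℝ) < (N₁ : ℝ) := lt_of_lt_of_le one_pos hN₁1
  have hRN₁ : R ≤ (N₁ : ℝ) * m := by
    have h1 : (N₀ : ℝ) ≤ (N₁ : ℝ) := by exact_mod_cast Nat.le_max_left N₀ 1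
    have := (div_le_iff₀ hmpos).mp (hN₀.trans h1)
    linarith
  -- every point of N₁ • F has norm ≥ R
  have hnorm : ∀ x ∈ (N₁ : ℝ) • F, R ≤ ‖x‖ := by
    rintro x ⟨y, hy, rfl⟩
    have : m ≤ ‖y‖ := hmle y hy
    calc R ≤ (N₁ : ℝ) * m := hRN₁
      _ ≤ (N₁ : ℝ) * ‖y‖ := by nlinarith
      _ = ‖(N₁ : ℝ) • y‖ := by
          rw [norm_smul, Real.norm_eq_abs, abs_of_pos hN₁pos]
  set I : ℝ := ∫ x in (N₁ : ℝ) • F, f x ∂(Measure.hausdorffMeasure (d : ℝ)) with hI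
  refine ⟨I / (N₁ : ℝ) ^ (ℓ + d), ?_⟩
  have key : ∀ N : ℕ, N₁ ≤ N →
      (∫ x in (N : ℝ) • F, f x ∂(Measure.hausdorffMeasure (d : ℝ)))
        = I / (N₁ : ℝ) ^ (ℓ + d) * (N : ℝ) ^ (ℓ + d) := by
    intro N hN
    have hNpos : (0 : ℝ) < (N : ℝ) := lt_of_lt_of_le hN₁pos (by exact_mod_cast hN)
    set r : ℝ := (N : ℝ) / (N₁ : ℝ) with hr
    have hrpos : 0 < r := div_pos hNpos hN₁pos
    have hr1 : 1 ≤ r := (le_div_iff₀ hN₁pos).mpr (by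
      have : (N₁ : ℝ) ≤ (N : ℝ) := by exact_mod_cast hN
      linarith)
    have hset : (N : ℝ) • F = r • ((N₁ : ℝ) • F) := by
      rw [smul_smul, hr, div_mul_cancel₀ _ hN₁pos.ne']
    have hmeas : MeasurableSet ((N₁ : ℝ) • F) := by
      have : (N₁ : ℝ) • F = ((N₁ : ℝ) • ·) '' F := by simp
      rw [this]
      exact (hFc.image (continuous_const_smul _)).measurableSet
    rw [hset, aux_intg n d (by positivity) hrpos _ f hf.continuous]
    rw [setIntegral_congr_fun hmeas (g := fun x => r ^ ℓ * f x)
      (fun x hx => hR x (hnorm x hx) r hr1)]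
    rw [integral_const_mul, ← hI]
    have hdiv : r ^ (ℓ + (d : ℝ)) = (N : ℝ) ^ (ℓ + d) / (N₁ : ℝ) ^ (ℓ + d) :=
      Real.div_rpow hNpos.le hN₁pos.le (ℓ + d)
    have : (r : ℝ) ^ (d : ℝ) * (r ^ ℓ * I) = r ^ (ℓ + (d : ℝ)) * I := by
      rw [Real.rpow_add hrpos]; ring
    rw [this, hdiv]; ring
  rw [Asymptotics.isBigO_iff]
  refine ⟨0, ?_⟩
  filter_upwards [Filter.eventually_ge_atTop N₁] with N hN
  rw [key N hN]
  simp
end
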